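/- Let (X, f) be a dynamical system on a compact uniform space. If f has the topological shadowing property, then the restriction of f to its non-wandering set Ω(f) also has the topological shadowing property (with pseudo-orbits in Ω(f) shadowed by points of Ω(f)). -/

import Mathlib

open Set Filter Function

variable {X : Type*}

/-- An `E`-chain of length `n` from `x` to `y` for the map `f`. -/
def ChainFrom (f : X → X) (E : Set (X × X)) (n : ℕ) (x y : X) : Prop :=
  ∃ c : ℕ → X, c 0 = x ∧ c n = y ∧ ∀ i < n, (f (c i), c (i + 1)) ∈ E

/-- Topological chain transitivity on a uniform space. -/
def ChainTransitive [UniformSpace X] (f : X → X) : Prop :=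
  ∀ E ∈ uniformity X, ∀ x y : X, ∃ n ≥ 1, ChainFrom f E n x y

/-- Lengths of `E`-chains from `x` to itself (loops). -/
def LoopLengths (f : X → X) (E : Set (X × X)) (x : X) : Set ℕ :=
  {n | 1 ≤ n ∧ ChainFrom f E n x x}

/-- `g` is the greatest common divisor of the set `S` of naturals. -/
def IsGcdOfSet (g : ℕ) (S : Set ℕ) : Prop :=
  (∀ n ∈ S, g ∣ n) ∧ ∀ d : ℕ, (∀ n ∈ S, d ∣ n) → d ∣ g

/-- The relation `x ∼_E y`: some `E`-chain from `x` to `y` has length a multiple of `ι`. -/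
def SimE (f : X → X) (E : Set (X × X)) (ι : ℕ) (x y : X) : Prop :=
  ∃ n, ι ∣ n ∧ ChainFrom f E n x y

/-- Topological shadowing property on a uniform space. -/
def Shadowing [UniformSpace X] (f : X → X) : Prop :=
  ∀ E ∈ uniformity X, ∃ D ∈ uniformity X,
    ∀ x : ℕ → X, (∀ i, (f (x i), x (i + 1)) ∈ D) →
      ∃ y, ∀ n, (f^[n] y, x n) ∈ E

/-- Topological chain mixing on a uniform space. -/
def ChainMixing [UniformSpace X] (f : X → X) : Prop :=
  ∀ D ∈ uniformity X, ∀ x y : X, ∃ N ≥ 1, ∀ n ≥ N, ChainFrom f D n x y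

/-- A non-wandering point of `f`. -/
def NonWandering [TopologicalSpace X] (f : X → X) (x : X) : Prop :=
  ∀ V ∈ nhds x, ∃ n ≥ 1, (V ∩ f^[n] ⁻¹' V).Nonempty

/-- Topological transitivity. -/
def TopTransitive [TopologicalSpace X] (f : X → X) : Prop :=
  ∀ U V : Set X, IsOpen U → IsOpen V → U.Nonempty → V.Nonempty →
    ∃ n : ℕ, (U ∩ f^[n] ⁻¹' V).Nonempty

/-- A syndetic set of natural numbers (bounded gaps). -/
def Syndetic (A : Set ℕ) : Prop :=
  ∃ k : ℕ, ∀ n : ℕ, ∃ m, n ≤ m ∧ m ≤ n + k ∧ m ∈ A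

/-- A minimal (almost periodic) point of `f`. -/
def MinimalPt [TopologicalSpace X] (f : X → X) (y : X) : Prop :=
  ∀ V ∈ nhds y, Syndetic {n : ℕ | f^[n] y ∈ V}

/-- Equicontinuity of a dynamical system on a uniform space. -/
def Equicont [UniformSpace X] (f : X → X) : Prop :=
  ∀ E ∈ uniformity X, ∃ D ∈ uniformity X, ∀ n : ℕ, ∀ p ∈ D, (f^[n] p.1, f^[n] p.2) ∈ E

/-!
Shrink `E` to a closed entourage `E'` and let `G` come from shadowing for `E'`. A non-wandering
point `x` carries `G`-loops, so for `D` small enough every `x'` with `(f x, x') ∈ D` is joined back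
to `x` by a `G`-chain. Hence the segment `x 0, …, x (k + 1)` of a `D`-pseudo-orbit in `Ω(f)`,
closed up by chains back to `x 0`, is a periodic `G`-pseudo-orbit. Along multiples of the period,
the orbit of a point shadowing it accumulates at a non-wandering point, which `E'`-shadows the
segment because `E'` is closed. As `Ω(f)` is closed, a cluster point of these points over `k`
`E'`-shadows the whole pseudo-orbit.
-/

open scoped Uniformity

section Chains

variable {f : X → X} {G : Set (X × X)}

theorem exists_chain_append {m n : ℕ} {c₁ c₂ : ℕ → X}
    (h₁ : ∀ i < m, (f (c₁ i), c₁ (i + 1)) ∈ G) (h₂ : ∀ i < n, (f (c₂ i), c₂ (i + 1)) ∈ G)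
    (h : c₁ m = c₂ 0) :
    ∃ c : ℕ → X, (∀ i ≤ m, c i = c₁ i) ∧ c (m + n) = c₂ n ∧
      ∀ i < m + n, (f (c i), c (i + 1)) ∈ G := by
  refine ⟨fun i => if i ≤ m then c₁ i else c₂ (i - m), fun i hi => if_pos hi, ?_, fun i hi => ?_⟩
  · rcases n.eq_zero_or_pos with rfl | hn
    · simpa using h
    · simp [show ¬ m + n ≤ m by omega]
  · rcases lt_trichotomy i m with hlt | rfl | hgt
    · simpa [hlt.le, Nat.succ_le_of_lt hlt] using h₁ i hlt
    · simpa [h] using h₂ 0 (by omega)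
    · simpa [hgt.not_ge, show ¬ i + 1 ≤ m by omega, show i + 1 - m = i - m + 1 by omega]
        using h₂ (i - m) (by omega)

theorem ChainFrom.trans {m n : ℕ} {x y z : X} (h₁ : ChainFrom f G m x y)
    (h₂ : ChainFrom f G n y z) : ChainFrom f G (m + n) x z := by
  obtain ⟨c₁, hc₁0, hc₁m, hc₁⟩ := h₁
  obtain ⟨c₂, hc₂0, hc₂n, hc₂⟩ := h₂
  obtain ⟨c, hc₁, hcn, hc⟩ := exists_chain_append hc₁ hc₂ (hc₁m.trans hc₂0.symm)
  exact ⟨c, (hc₁ 0 (Nat.zero_le m)).trans hc₁0, hcn.trans hc₂n, hc⟩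

theorem chain_mod_of_loop {T : ℕ} {c : ℕ → X} (hT : 0 < T)
    (hc : ∀ i < T, (f (c i), c (i + 1)) ∈ G) (hcT : c T = c 0) (i : ℕ) :
    (f (c (i % T)), c ((i + 1) % T)) ∈ G := by
  have hi := hc (i % T) (Nat.mod_lt i hT)
  rw [← Nat.mod_add_mod]
  by_cases hlt : i % T + 1 < T
  · rwa [Nat.mod_eq_of_lt hlt]
  · have heq : i % T + 1 = T := by have := Nat.mod_lt i hT; omega
    rw [heq, Nat.mod_self, ← hcT]
    rwa [heq] at hi

end Chains

section Topological

variable [TopologicalSpace X] {f : X → X}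

theorem isClosed_setOf_nonWandering (f : X → X) : IsClosed {x | NonWandering f x} := by
  refine isClosed_of_closure_subset fun y hy V hV => ?_
  obtain ⟨x, hxV, hx⟩ := mem_closure_iff_nhds.mp hy _ (interior_mem_nhds.mpr hV)
  obtain ⟨n, hn, w, hw, hnw⟩ := hx _ (isOpen_interior.mem_nhds hxV)
  exact ⟨n, hn, w, interior_subset hw, interior_subset (s := V) hnw⟩

theorem nonWandering_of_mapClusterPt {u : ℕ → ℕ} (hu : StrictMono u) {y z : X}
    (h : MapClusterPt y atTop fun j => f^[u j] z) : NonWandering f y := by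
  intro V hV
  have hfreq : ∃ᶠ j in atTop, f^[u j] z ∈ V := h.frequently hV
  obtain ⟨i, -, hi⟩ := frequently_atTop.mp hfreq 0
  obtain ⟨j, hij, hj⟩ := frequently_atTop.mp hfreq (i + 1)
  have hlt : u i < u j := hu hij
  refine ⟨u j - u i, by omega, f^[u i] z, hi, ?_⟩
  rwa [mem_preimage, ← iterate_add_apply, Nat.sub_add_cancel hlt.le]

theorem isClosed_setOf_iterate_mem (hf : Continuous f) {E : Set (X × X)} (hE : IsClosed E)
    (n : ℕ) (a : X) : IsClosed {w | (f^[n] w, a) ∈ E} :=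
  hE.preimage ((hf.iterate n).prodMk continuous_const)

theorem exists_nonWandering_shadow_of_periodic [CompactSpace X] (hf : Continuous f)
    {E : Set (X × X)} (hE : IsClosed E) {Z : ℕ → X} {T : ℕ} (hT : 0 < T) (hZ : Periodic Z T)
    {z : X} (hz : ∀ n, (f^[n] z, Z n) ∈ E) : ∃ y, NonWandering f y ∧ ∀ n, (f^[n] y, Z n) ∈ E := by
  obtain ⟨y, hy⟩ := exists_clusterPt_of_compactSpace (map (fun j => f^[j * T] z) atTop)
  refine ⟨y, nonWandering_of_mapClusterPt (strictMono_mul_right_of_pos hT) hy, fun n => ?_⟩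
  refine (isClosed_setOf_iterate_mem hf hE n (Z n)).mem_of_mapClusterPt hy
    (Eventually.of_forall fun j => ?_)
  have hperiod : Z (n + j * T) = Z n := by simpa using hZ.nat_mul j n
  simpa [← iterate_add_apply, hperiod] using hz (n + j * T)

theorem exists_nonWandering_shadow_initial_segment [CompactSpace X] (hf : Continuous f)
    {E G : Set (X × X)} (hE : IsClosed E)
    (hshadow : ∀ Z : ℕ → X, (∀ i, (f (Z i), Z (i + 1)) ∈ G) → ∃ z, ∀ n, (f^[n] z, Z n) ∈ E)
    {x : ℕ → X} (hx : ∀ i, (f (x i), x (i + 1)) ∈ G)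
    (hback : ∀ i, ∃ m, ChainFrom f G m (x (i + 1)) (x i)) (k : ℕ) :
    ∃ y, NonWandering f y ∧ ∀ n ≤ k, (f^[n] y, x n) ∈ E := by
  have hreturn : ∀ j, ∃ m, ChainFrom f G m (x j) (x 0) := by
    intro j
    induction j with
    | zero => exact ⟨0, x, rfl, rfl, fun i hi => absurd hi (Nat.not_lt_zero i)⟩
    | succ j ih =>
      obtain ⟨m₁, h₁⟩ := hback j
      obtain ⟨m₂, h₂⟩ := ih
      exact ⟨m₁ + m₂, h₁.trans h₂⟩
  obtain ⟨m, c', hc'0, hc'm, hc'⟩ := hreturn (k + 1)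
  obtain ⟨c, hcx, hcT, hc⟩ :=
    exists_chain_append (fun i _ => hx i) hc' (m := k + 1) hc'0.symm
  have hT : 0 < k + 1 + m := by omega
  have hloop : c (k + 1 + m) = c 0 := by rw [hcT, hc'm, hcx 0 (Nat.zero_le _)]
  obtain ⟨z, hz⟩ := hshadow _ (chain_mod_of_loop hT hc hloop)
  obtain ⟨y, hy, hyz⟩ :=
    exists_nonWandering_shadow_of_periodic hf hE hT ((Nat.periodic_mod _).comp c) hz
  refine ⟨y, hy, fun n hn => ?_⟩
  simpa [Nat.mod_eq_of_lt (show n < k + 1 + m by omega), hcx n (by omega)] using hyz n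

end Topological

section Uniform

variable [UniformSpace X] {f : X → X}

theorem NonWandering.exists_chainFrom_self (hf : UniformContinuous f) {x : X}
    (hx : NonWandering f x) {D : Set (X × X)} (hD : D ∈ 𝓤 X) :
    ∃ n ≥ 1, ChainFrom f D n x x := by
  obtain ⟨K, hK, hKD⟩ := comp_mem_uniformity_sets hD
  obtain ⟨H, hH, _, hHK⟩ := symm_of_uniformity (inter_mem hK (hf hK))
  obtain ⟨n, hn, u, hu, hnu⟩ := hx _ (UniformSpace.ball_mem_nhds x hH)
  set c : ℕ → X := fun i => if i = 0 ∨ i = n then x else f^[i] u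
  have hc : ∀ i, (c i, f^[i] u) ∈ H := by
    intro i
    simp only [c]
    split_ifs with hend
    · rcases hend with rfl | rfl
      exacts [hu, hnu]
    · exact refl_mem_uniformity hH
  refine ⟨n, hn, c, by simp [c], by simp [c], fun i _ => hKD ⟨f^[i + 1] u, ?_, ?_⟩⟩
  · simpa [iterate_succ_apply'] using (hHK (hc i)).2
  · exact (hHK (SetRel.symm H (hc (i + 1)))).1

theorem exists_mem_uniformity_chainFrom_return (hf : UniformContinuous f) {G : Set (X × X)}
    (hG : G ∈ 𝓤 X) : ∃ D ∈ 𝓤 X, D ⊆ G ∧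
      ∀ x x', NonWandering f x → (f x, x') ∈ D → ∃ m, ChainFrom f G m x' x := by
  obtain ⟨K, hK, hKG⟩ := comp_mem_uniformity_sets hG
  obtain ⟨W, hW, _, hWK⟩ := comp_symm_mem_uniformity_sets (hf hK)
  have hKG' : K ⊆ G := (subset_comp_self_of_mem_uniformity hK).trans hKG
  refine ⟨W ∩ K, inter_mem hW hK, inter_subset_right.trans hKG', fun x x' hx hxx' => ?_⟩
  obtain ⟨n, hn, hloop⟩ := hx.exists_chainFrom_self hf (inter_mem hW hK)
  -- Going twice around makes the loop `c` long enough to replace its second point `c 1` by `x'`.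
  obtain ⟨c, hc0, hcx, hc⟩ := hloop.trans hloop
  have hx'c : (f x', f (c 1)) ∈ K :=
    hWK (SetRel.prodMk_mem_comp (SetRel.symm W hxx'.1) (by simpa [hc0] using (hc 0 (by omega)).1))
  refine ⟨n + n - 1, fun i => if i = 0 then x' else c (i + 1), rfl, ?_, fun i hi => ?_⟩
  · simpa [show n + n - 1 + 1 = n + n by omega, show n + n - 1 ≠ 0 by omega] using hcx
  · rcases i with _ | i
    · simpa using hKG ⟨f (c 1), hx'c, (hc 1 (by omega)).2⟩
    · simpa using hKG' (hc (i + 2) (by omega)).2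

end Uniform

theorem shadowing_restrict_nonwandering [UniformSpace X] [CompactSpace X]
    (f : X → X) (hf : UniformContinuous f) (hsh : Shadowing f) :
    ∀ E ∈ uniformity X, ∃ D ∈ uniformity X,
      ∀ x : ℕ → X, (∀ i, NonWandering f (x i)) →
        (∀ i, (f (x i), x (i + 1)) ∈ D) →
          ∃ y : X, NonWandering f y ∧ ∀ n : ℕ, (f^[n] y, x n) ∈ E := by
  intro E hE
  obtain ⟨E', ⟨hE', hE'_closed⟩, hE'E⟩ := uniformity_hasBasis_closed.mem_iff.mp hE
  obtain ⟨G, hG, hshadow⟩ := hsh E' hE'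
  obtain ⟨D, hD, hDG, hreturn⟩ := exists_mem_uniformity_chainFrom_return hf hG
  refine ⟨D, hD, fun x hxΩ hxD => ?_⟩
  choose ys hysΩ hys using
    exists_nonWandering_shadow_initial_segment hf.continuous hE'_closed hshadow
      (fun i => hDG (hxD i)) (fun i => hreturn _ _ (hxΩ i) (hxD i))
  obtain ⟨y, hy⟩ := exists_clusterPt_of_compactSpace (map ys atTop)
  refine ⟨y, (isClosed_setOf_nonWandering f).mem_of_mapClusterPt hy (.of_forall hysΩ),
    fun n => hE'E ?_⟩
  exact (isClosed_setOf_iterate_mem hf.continuous hE'_closed n (x n)).mem_of_mapClusterPt hy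
    (eventually_atTop.mpr ⟨n, fun k hk => hys k n hk⟩)
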